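/- Let I ⊂ S be a monomial ideal whose irredundant irreducible decomposition is I = ⋂_{a∈E} m^a with each a ∈ (Z_{>0})^{t(a)} (i.e., each component is generated by powers of an initial segment of variables). Then I is strongly stable if and only if: for every a = (a_1,...,a_t) ∈ E, every i with a_i > 1, and every j with i < j ≤ t, there exists b ∈ E with m^{a − e_i + e_j} ⊇ m^b, where e_i, e_j are unit vectors. -/

import Mathlib

/-!
Membership of a monomial `x^c` in `𝔪^a` is the disjunction `∃ q, a_q ≤ c_q`, and in `⋂ₛ 𝔪^{a_s}`
the conjunction of these over `s`.

If `I` is strongly stable, a minimal generator `x^g` of `I` outside `𝔪^{a - e_i + e_j}` could meet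
`𝔪^a` only through `g_j = a_j`, and moving one factor `x_j` to `x_i` would give a monomial of `I`
outside `𝔪^a`; so `I ⊆ 𝔪^{a - e_i + e_j}`. Irreducibility then puts a single component inside
`𝔪^{a - e_i + e_j}`: otherwise the lcm of one generator per component lying outside it would be a
monomial of `I` outside it.

Conversely, moving a factor `x_i` of `x^c ∈ 𝔪^a` to `x_j` (`j < i`) can only leave `𝔪^a` when
`c_i = a_i` is the sole witness and `a_j ≥ c_j + 2`; then `x^c ∈ 𝔪^b ⊆ 𝔪^{a - e_j + e_i}` supplies
another witness.
-/


open MvPolynomial Classical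

noncomputable section

/-- The monomial `x^a` with coefficient `1`. -/
def mon {σ : Type*} (k : Type*) [Field k] (a : σ →₀ ℕ) : MvPolynomial σ k :=
  MvPolynomial.monomial a 1

/-- `x^a` for an exponent vector given as a function on a finite type. -/
def monF {σ : Type*} [Fintype σ] (k : Type*) [Field k] (a : σ → ℕ) : MvPolynomial σ k :=
  mon k (Finsupp.equivFunOnFinite.symm a)

/-- A monomial ideal: an ideal generated by monomials. -/
def IsMonomialIdeal {σ : Type*} [Fintype σ] {k : Type*} [Field k]
    (I : Ideal (MvPolynomial σ k)) : Prop :=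
  ∃ A : Set (σ → ℕ), I = Ideal.span ((monF k) '' A)

/-- The set `G(I)` of (exponent vectors of) minimal monomial generators of a monomial
ideal `I`: monomials in `I` such that dividing by any variable leaves `I`. -/
def minGens {σ : Type*} [Fintype σ] {k : Type*} [Field k]
    (I : Ideal (MvPolynomial σ k)) : Set (σ → ℕ) :=
  {a | monF k a ∈ I ∧ ∀ i : σ, 0 < a i → monF k (a - Pi.single i 1) ∉ I}

/-- The total degree `|a|` of an exponent vector. -/
def degV {σ : Type*} [Fintype σ] (a : σ → ℕ) : ℕ := ∑ i, a i

/-- A strongly stable (monomial) ideal in `k[x_1, …, x_n]`. -/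
def StronglyStable {n : ℕ} {k : Type*} [Field k]
    (I : Ideal (MvPolynomial (Fin n) k)) : Prop :=
  IsMonomialIdeal I ∧
    ∀ a ∈ minGens I, ∀ i j : Fin n, j < i → 0 < a i →
      monF k (a - Pi.single i 1 + Pi.single j 1) ∈ I

/-- All minimal generators of `I` have degree at most `d`. -/
def GensDegLE {σ : Type*} [Fintype σ] {k : Type*} [Field k]
    (I : Ideal (MvPolynomial σ k)) (d : ℕ) : Prop :=
  ∀ a ∈ minGens I, degV a ≤ d

/-- `psum a i = a_1 + ⋯ + a_{i-1}` (the partial sum over indices `< i`). -/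
def psum {n : ℕ} (a : Fin n → ℕ) (i : Fin n) : ℕ :=
  ∑ j ∈ Finset.univ.filter (fun j => j < i), a j

/-- The exponent vector of the alternative polarization `b-pol(x^a)`:
`b-pol(x^a) = ∏_{1 ≤ i ≤ n, b_{i-1}+1 ≤ j ≤ b_i} x_{i,j}` where `b_i = a_1 + ⋯ + a_i`. -/
def bpolExp {n : ℕ} (d : ℕ) (a : Fin n → ℕ) : Fin n × Fin d → ℕ := fun p =>
  if psum a p.1 ≤ (p.2 : ℕ) ∧ (p.2 : ℕ) < psum a p.1 + a p.1 then 1 else 0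

/-- The alternative polarization `b-pol(I) ⊆ k[x_{i,j}]` of a monomial ideal `I`. -/
def bpolIdeal {n : ℕ} (d : ℕ) {k : Type*} [Field k]
    (I : Ideal (MvPolynomial (Fin n) k)) : Ideal (MvPolynomial (Fin n × Fin d) k) :=
  Ideal.span {q | ∃ a ∈ minGens I, q = monF k (bpolExp d a)}

/-- The prime monomial ideal `(x_i : i ∈ F)`. -/
def varIdeal {σ : Type*} (k : Type*) [Field k] (F : Set σ) : Ideal (MvPolynomial σ k) :=
  Ideal.span (MvPolynomial.X '' F)

/-- `F` gives an irreducible component `(x_i : i ∈ F)` of the squarefree monomial ideal `J`,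
i.e. `F` is minimal among subsets with `J ⊆ (x_i : i ∈ F)`. -/
def IsIrredCompSF {σ : Type*} {k : Type*} [Field k]
    (J : Ideal (MvPolynomial σ k)) (F : Set σ) : Prop :=
  J ≤ varIdeal k F ∧ ∀ F' ⊆ F, J ≤ varIdeal k F' → F' = F

/-- The Alexander dual of a squarefree monomial ideal: the ideal generated by the
monomials `∏_{i ∈ F} x_i` over the irreducible components `(x_i : i ∈ F)` of `J`. -/
def adual {σ : Type*} [Fintype σ] {k : Type*} [Field k]
    (J : Ideal (MvPolynomial σ k)) : Ideal (MvPolynomial σ k) :=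
  Ideal.span {q | ∃ F : Set σ, IsIrredCompSF J F ∧
    q = monF k (fun i => if i ∈ F then 1 else 0)}

/-- Transpose `x_{i,j} ↦ y_{j,i}` of an ideal of `k[x_{i,j}]`. -/
def transposeIdeal {n d : ℕ} {k : Type*} [Field k]
    (J : Ideal (MvPolynomial (Fin n × Fin d) k)) : Ideal (MvPolynomial (Fin d × Fin n) k) :=
  Ideal.map (MvPolynomial.rename (Prod.swap : Fin n × Fin d → Fin d × Fin n)
    : MvPolynomial (Fin n × Fin d) k →ₐ[k] MvPolynomial (Fin d × Fin n) k) J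

end

noncomputable section

/-- The irreducible monomial ideal `𝔪^a = (x_1^{a_1}, …, x_t^{a_t}) ⊆ k[x_1,…,x_n]`. -/
def powIdeal {n : ℕ} (k : Type*) [Field k] (t : ℕ) (h : t ≤ n) (a : Fin t → ℕ) :
    Ideal (MvPolynomial (Fin n) k) :=
  Ideal.span {q | ∃ i : Fin t, q = monF k (Pi.single (Fin.castLE h i) (a i))}

section Monomials

variable {σ : Type*} [Fintype σ] {k : Type*} [Field k]

theorem monF_dvd_monF {a b : σ → ℕ} (h : a ≤ b) : monF k a ∣ monF k b :=
  monomial_dvd_monomial.2 ⟨Or.inr fun x => by simpa using h x, one_dvd _⟩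

theorem monF_mem_of_le {I : Ideal (MvPolynomial σ k)} {a b : σ → ℕ} (ha : monF k a ∈ I)
    (h : a ≤ b) : monF k b ∈ I :=
  Ideal.mem_of_dvd _ (monF_dvd_monF h) ha

theorem monF_mem_span_monF_iff {B : Set (σ → ℕ)} {c : σ → ℕ} :
    monF k c ∈ Ideal.span (monF k '' B) ↔ ∃ b ∈ B, b ≤ c := by
  have : monF k '' B =
      (fun s => monomial s (1 : k)) '' (Finsupp.equivFunOnFinite.symm '' B) := by
    rw [Set.image_image]; rfl
  rw [this, mem_ideal_span_monomial_image]
  simp only [monF, mon, support_monomial, one_ne_zero, if_false, Finset.mem_singleton,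
    forall_eq, Set.exists_mem_image]
  exact ⟨fun ⟨b, hb, h⟩ => ⟨b, hb, fun x => by simpa using h x⟩,
    fun ⟨b, hb, h⟩ => ⟨b, hb, fun x => by simpa using h x⟩⟩

theorem IsMonomialIdeal.le_of_forall_monF_mem {I J : Ideal (MvPolynomial σ k)}
    (hI : IsMonomialIdeal I) (h : ∀ c, monF k c ∈ I → monF k c ∈ J) : I ≤ J := by
  obtain ⟨A, rfl⟩ := hI
  exact Ideal.span_le.2 fun _ ⟨c, hc, hcm⟩ => hcm ▸ h c (Ideal.subset_span ⟨c, hc, rfl⟩)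

theorem exists_mem_minGens_le {I : Ideal (MvPolynomial σ k)} {c : σ → ℕ} (hc : monF k c ∈ I) :
    ∃ g ∈ minGens I, g ≤ c := by
  obtain ⟨g, hgc, hg, hmin⟩ := exists_minimal_le_of_wellFoundedLT (fun g => monF k g ∈ I) c hc
  refine ⟨g, ⟨hg, fun i hi hmem => ?_⟩, hgc⟩
  have := hmin hmem (fun x => Nat.sub_le _ _) i
  simp only [Pi.sub_apply, Pi.single_eq_same] at this
  omega

end Monomials

theorem Pi.single_le_iff {ι : Type*} [DecidableEq ι] {i : ι} {x : ℕ} {f : ι → ℕ} :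
    Pi.single i x ≤ f ↔ x ≤ f i := by
  refine ⟨fun hf => by simpa using hf i, fun hx j => ?_⟩
  rcases eq_or_ne j i with rfl | hji
  · simpa using hx
  · simp [hji]

theorem pos_sub_single_add_single {ι : Type*} [DecidableEq ι] {a : ι → ℕ} (ha : ∀ q, 0 < a q)
    {i : ι} (hi : 1 < a i) (j q : ι) : 0 < (a - Pi.single i 1 + Pi.single j 1 : ι → ℕ) q := by
  have := ha q
  simp only [Pi.add_apply, Pi.sub_apply, Pi.single_apply]
  split_ifs <;> subst_vars <;> omega

section PowIdeal

variable {k : Type*} [Field k] {n t : ℕ} {h : t ≤ n}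

theorem powIdeal_eq_span_monF (a : Fin t → ℕ) :
    powIdeal k t h a =
      Ideal.span (monF k '' Set.range fun i => Pi.single (Fin.castLE h i) (a i)) := by
  rw [powIdeal, ← Set.range_comp]
  congr 1
  ext
  simp [eq_comm]

theorem monF_mem_powIdeal_iff {a : Fin t → ℕ} {c : Fin n → ℕ} :
    monF k c ∈ powIdeal k t h a ↔ ∃ i, a i ≤ c (Fin.castLE h i) := by
  simp [powIdeal_eq_span_monF, monF_mem_span_monF_iff, Pi.single_le_iff]

theorem monF_single_mem_powIdeal (a : Fin t → ℕ) (i : Fin t) :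
    monF k (Pi.single (Fin.castLE h i) (a i)) ∈ powIdeal k t h a :=
  Ideal.subset_span ⟨i, rfl⟩

theorem monF_sup_mem_powIdeal_iff {ι : Type*} {b : Fin t → ℕ} (hb : ∀ i, 0 < b i)
    (S : Finset ι) (u : ι → Fin n → ℕ) :
    monF k (S.sup u) ∈ powIdeal k t h b ↔ ∃ s ∈ S, monF k (u s) ∈ powIdeal k t h b := by
  simp only [monF_mem_powIdeal_iff, Finset.sup_apply, Finset.le_sup_iff (hb _)]
  exact ⟨fun ⟨i, s, hs, h⟩ => ⟨s, hs, i, h⟩, fun ⟨s, hs, i, h⟩ => ⟨i, s, hs, h⟩⟩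

theorem exists_powIdeal_le_of_iInf_le {ι : Type*} [Fintype ι] {m : ι → ℕ} (hm : ∀ s, m s ≤ n)
    (e : ∀ s, Fin (m s) → ℕ) {b : Fin t → ℕ} (hb : ∀ i, 0 < b i)
    (hle : ⨅ s, powIdeal k (m s) (hm s) (e s) ≤ powIdeal k t h b) :
    ∃ s, powIdeal k (m s) (hm s) (e s) ≤ powIdeal k t h b := by
  by_contra! hnot
  have hgen : ∀ s, ∃ i, monF k (Pi.single (Fin.castLE (hm s) i) (e s i)) ∉ powIdeal k t h b := by
    intro s
    by_contra! hall
    exact hnot s (Ideal.span_le.2 (by rintro _ ⟨i, rfl⟩; exact hall i))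
  choose i hi using hgen
  let u s : Fin n → ℕ := Pi.single (Fin.castLE (hm s) (i s)) (e s (i s))
  have hlcm : monF k (Finset.univ.sup u) ∈ ⨅ s, powIdeal k (m s) (hm s) (e s) :=
    Submodule.mem_iInf _ |>.2 fun s =>
      monF_mem_of_le (monF_single_mem_powIdeal _ _) (Finset.le_sup (f := u) (Finset.mem_univ s))
  obtain ⟨s, -, hs⟩ := (monF_sup_mem_powIdeal_iff hb _ _).1 (hle hlcm)
  exact hi s hs

theorem StronglyStable.le_powIdeal_shift {I : Ideal (MvPolynomial (Fin n) k)}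
    (hI : StronglyStable I) {a : Fin t → ℕ} (hle : I ≤ powIdeal k t h a) {i j : Fin t}
    (hij : i < j) (hj : 0 < a j) : I ≤ powIdeal k t h (a - Pi.single i 1 + Pi.single j 1) := by
  refine hI.1.le_of_forall_monF_mem fun c hc => ?_
  by_contra hc'
  obtain ⟨g, hg, hgc⟩ := exists_mem_minGens_le hc
  have hg' : ∀ q, g (Fin.castLE h q) < (a - Pi.single i 1 + Pi.single j 1 : Fin t → ℕ) q := by
    simpa [monF_mem_powIdeal_iff] using mt (monF_mem_of_le · hgc) hc'
  have hji : j ≠ i := hij.ne'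
  have hgj : g (Fin.castLE h j) = a j := by
    obtain ⟨q, hq⟩ := monF_mem_powIdeal_iff.1 (hle hg.1)
    have hgq := hg' q
    have hgj := hg' j
    simp only [Pi.add_apply, Pi.sub_apply, Pi.single_apply, hji, if_true, if_false] at hgq hgj
    split_ifs at hgq <;> subst_vars <;> omega
  obtain ⟨q, hq⟩ := monF_mem_powIdeal_iff.1
    (hle (hI.2 g hg (Fin.castLE h j) (Fin.castLE h i) hij (hgj ▸ hj)))
  have hgq := hg' q
  simp only [Pi.add_apply, Pi.sub_apply, Pi.single_apply, Fin.castLE_inj] at hq hgq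
  split_ifs at hq hgq <;> subst_vars <;> omega

theorem monF_shift_mem_powIdeal {a : Fin t → ℕ} {c : Fin n → ℕ} (hc : monF k c ∈ powIdeal k t h a)
    (hshift : ∀ p q : Fin t, 1 < a p → p < q →
      monF k c ∈ powIdeal k t h (a - Pi.single p 1 + Pi.single q 1))
    {i j : Fin n} (hji : j < i) :
    monF k (c - Pi.single i 1 + Pi.single j 1) ∈ powIdeal k t h a := by
  obtain ⟨q, hq⟩ := monF_mem_powIdeal_iff.1 hc
  rw [monF_mem_powIdeal_iff]
  by_cases hqi : Fin.castLE h q = i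
  · subst hqi
    let p : Fin t := ⟨j, Fin.lt_def.1 hji |>.trans q.isLt⟩
    have hpj : Fin.castLE h p = j := rfl
    have hpq : p < q := hji
    by_cases hap : a p ≤ c j + 1
    · exact ⟨p, by simp [hpj, hji.ne]; omega⟩
    · obtain ⟨q', hq'⟩ := monF_mem_powIdeal_iff.1 (hshift p q (by omega) hpq)
      refine ⟨q', ?_⟩
      simp only [Pi.add_apply, Pi.sub_apply, Pi.single_apply, Fin.castLE_inj] at hq' ⊢
      split_ifs at hq' ⊢ <;> subst_vars <;> omega
  · exact ⟨q, by simp [Pi.single_apply, hqi]; omega⟩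

end PowIdeal

theorem stronglyStable_iff_right_shift_general {n : ℕ} {k : Type*} [Field k]
    (I : Ideal (MvPolynomial (Fin n) k)) (hmon : IsMonomialIdeal I)
    (r : ℕ) (t : Fin r → ℕ) (ht : ∀ s, t s ≤ n)
    (a : (s : Fin r) → Fin (t s) → ℕ) (hpos : ∀ s i, 0 < a s i)
    (hdec : I = ⨅ s, powIdeal k (t s) (ht s) (a s)) :
    StronglyStable I ↔
      ∀ (s : Fin r) (i j : Fin (t s)), 1 < a s i → i < j →
        ∃ s' : Fin r,
          powIdeal k (t s') (ht s') (a s') ≤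
            powIdeal k (t s) (ht s)
              (fun q => a s q - (if q = i then 1 else 0) + (if q = j then 1 else 0)) := by
  have hshift_eq : ∀ s (i j : Fin (t s)),
      (fun q => a s q - (if q = i then 1 else 0) + (if q = j then 1 else 0)) =
        a s - Pi.single i 1 + Pi.single j 1 := by
    intro s i j; funext q; simp [Pi.single_apply]
  have hle : ∀ s, I ≤ powIdeal k (t s) (ht s) (a s) := fun s => hdec ▸ iInf_le _ s
  simp only [hshift_eq]
  constructor
  · intro hI s i j hi hij
    exact exists_powIdeal_le_of_iInf_le ht a (pos_sub_single_add_single (hpos s) hi j)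
      (hdec ▸ hI.le_powIdeal_shift (hle s) hij (hpos s j))
  · refine fun hcond => ⟨hmon, fun c hc i j hji _ => hdec ▸ Submodule.mem_iInf _ |>.2 fun s => ?_⟩
    refine monF_shift_mem_powIdeal (hle s hc.1) (fun p q hp hpq => ?_) hji
    obtain ⟨s', hs'⟩ := hcond s p q hp hpq
    exact hs' (hle s' hc.1)

/-- Let `I ⊆ S` be a monomial ideal whose irredundant irreducible
decomposition is `I = ⋂_{a ∈ E} 𝔪^a` with each component generated by powers of an
initial segment of the variables.  Then `I` is strongly stable iff for every
`a = (a_1,…,a_t) ∈ E`, every `i` with `a_i > 1` and every `j` with `i < j ≤ t`, there is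
`b ∈ E` with `𝔪^{a - e_i + e_j} ⊇ 𝔪^b`. -/
theorem stronglyStable_iff_right_shift {n : ℕ} {k : Type*} [Field k]
    (I : Ideal (MvPolynomial (Fin n) k)) (hmon : IsMonomialIdeal I)
    (r : ℕ) (t : Fin r → ℕ) (ht : ∀ s, t s ≤ n) (ht1 : ∀ s, 1 ≤ t s)
    (a : (s : Fin r) → Fin (t s) → ℕ) (hpos : ∀ s i, 0 < a s i)
    (hdec : I = ⨅ s, powIdeal k (t s) (ht s) (a s))
    (hirr : ∀ s : Fin r,
      ¬ (⨅ s' ∈ Finset.univ.erase s, powIdeal k (t s') (ht s') (a s')) ≤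
        powIdeal k (t s) (ht s) (a s)) :
    StronglyStable I ↔
      ∀ (s : Fin r) (i j : Fin (t s)), 1 < a s i → i < j →
        ∃ s' : Fin r,
          powIdeal k (t s') (ht s') (a s') ≤
            powIdeal k (t s) (ht s)
              (fun q => a s q - (if q = i then 1 else 0) + (if q = j then 1 else 0)) :=
  stronglyStable_iff_right_shift_general I hmon r t ht a hpos hdec
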